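/- arXiv:0805.2772 — 2 statements merged into one kernel-verified Lean document; each statement's English description precedes it below -/
import Mathlib

section
/- For every τ ∈ ℂ and every x ∈ ℂ, the derivative of the Hermite function satisfies the recurrence H_τ'(x) = 2τ·H_{τ−1}(x). -/
open Complex MeasureTheory Filter Topology

/-- Pochhammer symbol `(a)_m = a (a+1) ⋯ (a+m-1)` for complex `a`. -/
noncomputable def cPoch (a : ℂ) (m : ℕ) : ℂ := ∏ k ∈ Finset.range m, (a + k)

/-- Confluent hypergeometric function `₁F₁(a, b, z) = Σ (a)_m / (b)_m · z^m / m!`. -/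
noncomputable def oneF1 (a b z : ℂ) : ℂ :=
  ∑' m : ℕ, (cPoch a m / cPoch b m) * z ^ m / (Nat.factorial m : ℂ)

/-- The Hermite function `H_τ` of complex degree `τ`. -/
noncomputable def hermiteFn (τ x : ℂ) : ℂ :=
  2 ^ τ * (Complex.Gamma (1 / 2) / Complex.Gamma ((1 - τ) / 2)) *
      oneF1 (-τ / 2) (1 / 2) (x ^ 2) +
    2 ^ τ * x * (Complex.Gamma (-(1 / 2)) / Complex.Gamma (-τ / 2)) *
      oneF1 ((1 - τ) / 2) (3 / 2) (x ^ 2)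

/-- Moments of the generalized Hermite linear functional `𝒢_H(τ)`:
`m_{2k}(τ) = (τ+1)_{2k} / (k! 2^{2k})` and `m_{2k+1}(τ) = 0`. -/
noncomputable def genHermiteMoment (τ : ℂ) (n : ℕ) : ℂ :=
  if n % 2 = 0 then cPoch (τ + 1) n / (((n / 2).factorial : ℂ) * 2 ^ n) else 0

/-! Differentiating the series termwise gives
`(₁F₁(a, b, ·))' = (a / b) ₁F₁(a + 1, b + 1, ·)`, and the contiguous relation
`₁F₁(a, b, z) - ₁F₁(a, b + 1, z) = a z / (b (b + 1)) ₁F₁(a + 1, b + 2, z)` turns this into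
`(x ₁F₁(a, 3/2, x²))' = ₁F₁(a, 1/2, x²)`. Hence differentiation maps the even part of `H_τ`
onto the odd part of `H_{τ-1}` and the odd part of `H_τ` onto the even part of `H_{τ-1}`;
the Gamma prefactors match because `Γ(-1/2) = -2 Γ(1/2)` and `1 / Γ(s) = s / Γ(s + 1)`. -/

lemma cPoch_succ_right (a : ℂ) (m : ℕ) : cPoch a (m + 1) = cPoch a m * (a + m) :=
  Finset.prod_range_succ _ _

lemma cPoch_succ_left (a : ℂ) (m : ℕ) : cPoch a (m + 1) = a * cPoch (a + 1) m := by
  simp only [cPoch, Finset.prod_range_succ', Nat.cast_zero, add_zero, Nat.cast_succ, add_assoc,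
    add_comm (1 : ℂ), mul_comm a]

lemma tendsto_inv_add_natCast {𝕜 : Type*} [NormedDivisionRing 𝕜] [NormSMulClass ℤ 𝕜] (c : 𝕜) :
    Tendsto (fun m : ℕ => (c + m)⁻¹) atTop (𝓝 0) :=
  tendsto_inv₀_cobounded.comp
    ((tendsto_const_add_cobounded c).comp tendsto_natCast_atTop_cobounded)

lemma tendsto_oneF1_ratio (a b z : ℂ) :
    Tendsto (fun m : ℕ => (a + m) * z / ((b + m) * (m + 1))) atTop (𝓝 0) := by
  have hfactor : ∀ m : ℕ, (a + m) * z / ((b + m) * (m + 1)) =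
      z * (1 + (a - 1) * (1 + m : ℂ)⁻¹) * (b + m)⁻¹ := fun m => by
    have : (1 + m : ℂ) ≠ 0 := by rw [add_comm]; exact Nat.cast_add_one_ne_zero m
    field_simp
    ring
  simpa [hfactor] using ((tendsto_const_nhds.add
    ((tendsto_inv_add_natCast 1).const_mul (a - 1))).const_mul z).mul (tendsto_inv_add_natCast b)

noncomputable def oneF1Term (a b z : ℂ) (m : ℕ) : ℂ :=
  cPoch a m / cPoch b m * z ^ m / (Nat.factorial m : ℂ)

lemma oneF1_eq_tsum (a b z : ℂ) : oneF1 a b z = ∑' m, oneF1Term a b z m := rfl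

lemma oneF1Term_succ (a b z : ℂ) (m : ℕ) :
    oneF1Term a b z (m + 1) = oneF1Term a b z m * ((a + m) * z / ((b + m) * (m + 1))) := by
  simp only [oneF1Term, cPoch_succ_right, pow_succ, Nat.factorial_succ]
  push_cast
  simp only [div_eq_mul_inv, mul_inv]
  ring

lemma summable_oneF1Term (a b z : ℂ) : Summable (oneF1Term a b z) := by
  refine summable_of_ratio_norm_eventually_le (r := 1 / 2) (by norm_num) ?_
  filter_upwards [(tendsto_oneF1_ratio a b z).norm.eventually
    (ge_mem_nhds (by norm_num : ‖(0 : ℂ)‖ < 1 / 2))] with m hm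
  rw [oneF1Term_succ, norm_mul, mul_comm]
  exact mul_le_mul_of_nonneg_right hm (norm_nonneg _)

lemma oneF1_eq_one_add_tsum (a b z : ℂ) :
    oneF1 a b z = 1 + ∑' m, oneF1Term a b z (m + 1) := by
  rw [oneF1_eq_tsum, (summable_oneF1Term a b z).tsum_eq_zero_add]
  simp [oneF1Term, cPoch]

lemma norm_oneF1Term_le (a b : ℂ) (m : ℕ) {y w : ℂ} (h : ‖y‖ ≤ ‖w‖) :
    ‖oneF1Term a b y m‖ ≤ ‖oneF1Term a b w m‖ := by
  simp only [oneF1Term, norm_div, norm_mul, norm_pow]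
  gcongr

lemma hasDerivAt_oneF1Term_succ (a b w : ℂ) (m : ℕ) :
    HasDerivAt (fun y => oneF1Term a b y (m + 1))
      (a / b * oneF1Term (a + 1) (b + 1) w m) w := by
  have hm : (m + 1 : ℂ) ≠ 0 := Nat.cast_add_one_ne_zero m
  refine (((hasDerivAt_pow (m + 1) w).const_mul (cPoch a (m + 1) / cPoch b (m + 1))).div_const
    ((m + 1).factorial : ℂ)).congr_deriv ?_
  simp only [oneF1Term, cPoch_succ_left, Nat.factorial_succ, Nat.add_sub_cancel]
  push_cast
  rw [mul_div_assoc, mul_div_assoc, mul_div_mul_left _ _ hm]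
  ring

lemma hasDerivAt_oneF1 (a b z : ℂ) :
    HasDerivAt (oneF1 a b) (a / b * oneF1 (a + 1) (b + 1) z) z := by
  set R : ℝ := ‖z‖ + 1
  have hz : z ∈ Metric.ball (0 : ℂ) R := by simp [R]
  have hbound : ∀ m, ∀ y ∈ Metric.ball (0 : ℂ) R,
      ‖a / b * oneF1Term (a + 1) (b + 1) y m‖ ≤
        ‖a / b * oneF1Term (a + 1) (b + 1) R m‖ := by
    intro m y hy
    rw [norm_mul, norm_mul]
    gcongr 1
    refine norm_oneF1Term_le _ _ _ (le_of_lt ?_)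
    simpa [abs_of_nonneg (by positivity : (0 : ℝ) ≤ R)] using hy
  have hseries := hasDerivAt_tsum_of_isPreconnected
    ((summable_oneF1Term (a + 1) (b + 1) R).mul_left (a / b)).norm Metric.isOpen_ball
    (convex_ball (0 : ℂ) R).isPreconnected (fun m y _ => hasDerivAt_oneF1Term_succ a b y m)
    hbound hz ((summable_nat_add_iff 1).2 (summable_oneF1Term a b z)) hz
  rw [tsum_mul_left] at hseries
  rw [funext (oneF1_eq_one_add_tsum a b)]
  exact hseries.const_add 1

lemma oneF1Term_succ_sub_oneF1Term_succ (a : ℂ) {b : ℂ} (hb : ∀ m : ℕ, b + m ≠ 0) (z : ℂ)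
    (m : ℕ) : oneF1Term a b z (m + 1) - oneF1Term a (b + 1) z (m + 1) =
      a * z / (b * (b + 1)) * oneF1Term (a + 1) (b + 2) z m := by
  have hb' : ∀ k : ℕ, ∀ c : ℂ, b + k = c → c ≠ 0 := fun k c h => h ▸ hb k
  have hb0 : b ≠ 0 := hb' 0 b (by simp)
  have hb1 : b + 1 ≠ 0 := hb' 1 _ (by simp)
  have hP1 : cPoch (b + 1) m ≠ 0 :=
    Finset.prod_ne_zero_iff.2 fun k _ => hb' (k + 1) _ (by push_cast; ring)
  have hP2 : cPoch (b + 2) m ≠ 0 :=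
    Finset.prod_ne_zero_iff.2 fun k _ => hb' (k + 2) _ (by push_cast; ring)
  have hfac : (m.factorial : ℂ) ≠ 0 := Nat.cast_ne_zero.2 m.factorial_ne_zero
  have hrec : cPoch (b + 1) m * (b + 1 + m) = (b + 1) * cPoch (b + 2) m := by
    rw [← cPoch_succ_right, cPoch_succ_left, add_assoc, one_add_one_eq_two]
  simp only [oneF1Term, cPoch_succ_left, Nat.factorial_succ, pow_succ, add_assoc,
    one_add_one_eq_two]
  push_cast
  field_simp
  linear_combination a * cPoch (a + 1) m * z ^ m * z * hrec.symm

lemma oneF1_sub_oneF1_add_one (a : ℂ) {b : ℂ} (hb : ∀ m : ℕ, b + m ≠ 0) (z : ℂ) :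
    oneF1 a b z - oneF1 a (b + 1) z = a * z / (b * (b + 1)) * oneF1 (a + 1) (b + 2) z := by
  have hshift (c : ℂ) := (summable_nat_add_iff 1).2 (summable_oneF1Term a c z)
  rw [oneF1_eq_one_add_tsum, oneF1_eq_one_add_tsum, add_sub_add_left_eq_sub,
    ← (hshift b).tsum_sub (hshift (b + 1))]
  simp only [oneF1Term_succ_sub_oneF1Term_succ a hb z, tsum_mul_left, ← oneF1_eq_tsum]

lemma hasDerivAt_oneF1_sq (a b x : ℂ) :
    HasDerivAt (fun y => oneF1 a b (y ^ 2))
      (2 * a / b * x * oneF1 (a + 1) (b + 1) (x ^ 2)) x := by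
  refine ((hasDerivAt_oneF1 a b (x ^ 2)).comp x (hasDerivAt_pow 2 x)).congr_deriv ?_
  ring

lemma hasDerivAt_mul_oneF1_three_halves (a x : ℂ) :
    HasDerivAt (fun y => y * oneF1 a (3 / 2) (y ^ 2)) (oneF1 a (1 / 2) (x ^ 2)) x := by
  have hhalf : ∀ m : ℕ, (1 / 2 : ℂ) + m ≠ 0 := fun m => by
    rw [← ofReal_natCast, ← ofReal_one, ← ofReal_ofNat, ← ofReal_div, ← ofReal_add,
      ofReal_ne_zero]
    positivity
  have hcontig := oneF1_sub_oneF1_add_one a hhalf (x ^ 2)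
  norm_num at hcontig
  refine ((hasDerivAt_id x).mul (hasDerivAt_oneF1_sq a (3 / 2) x)).congr_deriv ?_
  norm_num
  linear_combination -hcontig

lemma Gamma_neg_one_half : Gamma (-(1 / 2)) = -2 * Gamma (1 / 2) := by
  have h := Gamma_add_one (-(1 / 2)) (by norm_num)
  norm_num at h
  linear_combination 2 * h

theorem hermiteFn_deriv (τ x : ℂ) :
    deriv (hermiteFn τ) x = 2 * τ * hermiteFn (τ - 1) x := by
  have hsplit : hermiteFn τ = fun y =>
      2 ^ τ * (Gamma (1 / 2) / Gamma ((1 - τ) / 2)) * oneF1 (-τ / 2) (1 / 2) (y ^ 2) +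
        2 ^ τ * (Gamma (-(1 / 2)) / Gamma (-τ / 2)) *
          (y * oneF1 ((1 - τ) / 2) (3 / 2) (y ^ 2)) := by
    funext y
    rw [hermiteFn]
    ring
  rw [hsplit, (((hasDerivAt_oneF1_sq (-τ / 2) (1 / 2) x).const_mul _).fun_add
    ((hasDerivAt_mul_oneF1_three_halves ((1 - τ) / 2) x).const_mul _)).deriv]
  have hGamma : (Gamma (-τ / 2))⁻¹ = -τ / 2 * (Gamma ((2 - τ) / 2))⁻¹ := by
    simpa [div_add_one, ← sub_eq_neg_add] using
      one_div_Gamma_eq_self_mul_one_div_Gamma_add_one (-τ / 2)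
  have hpow : (2 : ℂ) ^ (τ - 1) = 2 ^ τ / 2 := by rw [cpow_sub _ _ two_ne_zero, cpow_one]
  rw [hermiteFn, hpow, Gamma_neg_one_half, show -τ / 2 + 1 = (2 - τ) / 2 by ring,
    show (1 - (τ - 1)) / 2 = (2 - τ) / 2 by ring, show -(τ - 1) / 2 = (1 - τ) / 2 by ring]
  norm_num
  linear_combination -2 * 2 ^ τ * Gamma (1 / 2) * oneF1 ((1 - τ) / 2) (1 / 2) (x ^ 2) * hGamma
end

section
/- For every τ ∈ ℂ and every x ∈ ℂ, the Hermite function satisfies the second-order linear differential equation H_τ''(x) − 2x·H_τ'(x) + 2τ·H_τ(x) = 0. -/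
open Complex MeasureTheory Filter Topology

/-!
Under the substitution `z = x²`, the Hermite operator `u'' - 2x u' + 2τ u` sends `F(x²)` to
`4 K_{-τ/2, 1/2} F (x²)` and `x G(x²)` to `4x K_{(1-τ)/2, 3/2} G (x²)`, where
`K_{a,b} F = z F'' + (b - z) F' - a F` is Kummer's operator. Both `₁F₁`'s in `H_τ` solve Kummer's
equation: on a power series it is the coefficient recurrence `(m+1)(b+m) c_{m+1} = (a+m) c_m`, and
the series converge everywhere since `₁F₁(a, b, ·)` is `Γ(b)` times the regularized
hypergeometric function `₁F̃₁(a; b; ·)`, which is entire.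
-/

namespace FormalMultilinearSeries

variable {𝕜 : Type*} [NontriviallyNormedField 𝕜]

theorem ext_coeff {E : Type*} [NormedAddCommGroup E] [NormedSpace 𝕜 E]
    {p q : FormalMultilinearSeries 𝕜 𝕜 E} (h : ∀ n, p.coeff n = q.coeff n) : p = q := by
  funext n
  rw [← mkPiRing_coeff_eq p, ← mkPiRing_coeff_eq q, h]

end FormalMultilinearSeries

open FormalMultilinearSeries

section PowerSeries

variable {𝕜 : Type*} [NontriviallyNormedField 𝕜] {f : 𝕜 → 𝕜} {c : ℕ → 𝕜}

theorem HasFPowerSeriesOnBall.deriv_ofScalars [CompleteSpace 𝕜] {r : ENNReal}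
    (h : HasFPowerSeriesOnBall f (ofScalars 𝕜 c) 0 r) :
    HasFPowerSeriesOnBall (deriv f) (ofScalars 𝕜 fun n => (n + 1) * c (n + 1)) 0 r := by
  have hd := (ContinuousLinearMap.apply 𝕜 𝕜 (1 : 𝕜)).comp_hasFPowerSeriesOnBall h.fderiv
  convert hd using 1
  · funext z; simp
  · refine ext_coeff fun n => ?_
    have hcoeff := (ofScalars 𝕜 c).derivSeries_coeff_one n
    rw [coeff_ofScalars] at hcoeff
    rw [coeff_ofScalars, ← Nat.cast_succ, ← nsmul_eq_mul, ← hcoeff]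
    rfl

theorem HasFPowerSeriesOnBall.hasSum_ofScalars_top
    (h : HasFPowerSeriesOnBall f (ofScalars 𝕜 c) 0 ⊤) (z : 𝕜) :
    HasSum (fun n => c n * z ^ n) (f z) := by
  simpa only [ofScalars_apply_eq, smul_eq_mul, zero_add] using h.hasSum (y := z) (by simp)

theorem HasFPowerSeriesOnBall.differentiable_top [CompleteSpace 𝕜]
    {p : FormalMultilinearSeries 𝕜 𝕜 𝕜} (h : HasFPowerSeriesOnBall f p 0 ⊤) :
    Differentiable 𝕜 f := by
  simpa [differentiableOn_univ] using h.differentiableOn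

theorem hasFPowerSeriesOnBall_ofScalarsSum [CompleteSpace 𝕜]
    (hc : (ofScalars 𝕜 c).radius = ⊤) :
    HasFPowerSeriesOnBall (ofScalarsSum c) (ofScalars 𝕜 c) 0 ⊤ :=
  hc ▸ (ofScalars 𝕜 c).hasFPowerSeriesOnBall (by simp [hc])

theorem HasSum.mul_pow_of_succ {d : ℕ → 𝕜} {z s : 𝕜}
    (h : HasSum (fun n => d (n + 1) * z ^ n) s) :
    HasSum (fun n => d n * z ^ n) (d 0 + z * s) := by
  have hz : HasSum (fun n => d (n + 1) * z ^ (n + 1)) (z * s) := by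
    rw [show (fun n => d (n + 1) * z ^ (n + 1)) = fun n => z * (d (n + 1) * z ^ n) from
      funext fun n => by ring]
    exact h.mul_left z
  simpa only [pow_zero, mul_one] using hz.zero_add (f := fun n => d n * z ^ n)

noncomputable def kummerOp (a b : 𝕜) (F : 𝕜 → 𝕜) (z : 𝕜) : 𝕜 :=
  z * deriv (deriv F) z + (b - z) * deriv F z - a * F z

theorem kummerOp_ofScalarsSum [CompleteSpace 𝕜] {a b : 𝕜} (hc : (ofScalars 𝕜 c).radius = ⊤)
    (hrec : ∀ n : ℕ, (n + 1) * (b + n) * c (n + 1) = (a + n) * c n) (z : 𝕜) :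
    kummerOp a b (ofScalarsSum c) z = 0 := by
  set f : 𝕜 → 𝕜 := ofScalarsSum c
  have h0 := hasFPowerSeriesOnBall_ofScalarsSum hc
  have h1 := h0.deriv_ofScalars
  have h2 := h1.deriv_ofScalars
  have hs0 : HasSum (fun n => c n * z ^ n) (f z) := h0.hasSum_ofScalars_top z
  have hs1 : HasSum (fun n : ℕ => ((n : 𝕜) + 1) * c (n + 1) * z ^ n) (deriv f z) :=
    h1.hasSum_ofScalars_top z
  have hz1 : HasSum (fun n : ℕ => (n : 𝕜) * c n * z ^ n) (z * deriv f z) := by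
    simpa only [Nat.cast_zero, zero_mul, zero_add] using
      HasSum.mul_pow_of_succ (d := fun n : ℕ => (n : 𝕜) * c n)
        (by simpa only [Nat.cast_succ] using hs1)
  have hz2 : HasSum (fun n : ℕ => (n : 𝕜) * ((n + 1) * c (n + 1)) * z ^ n)
      (z * deriv (deriv f) z) := by
    simpa only [Nat.cast_zero, zero_mul, zero_add] using
      HasSum.mul_pow_of_succ (d := fun n : ℕ => (n : 𝕜) * ((n + 1) * c (n + 1)))
        (by simpa only [Nat.cast_succ] using h2.hasSum_ofScalars_top z)
  have hsum := ((hz2.add (hs1.mul_left b)).sub hz1).sub (hs0.mul_left a)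
  rw [show (fun n : ℕ => (n : 𝕜) * ((n + 1) * c (n + 1)) * z ^ n
      + b * ((n + 1) * c (n + 1) * z ^ n) - n * c n * z ^ n - a * (c n * z ^ n)) = fun _ => 0 from
    funext fun n => by linear_combination z ^ n * hrec n] at hsum
  unfold kummerOp
  linear_combination hsum.unique hasSum_zero

end PowerSeries

section KummerFunction

variable {b : ℂ}

theorem cPoch_eq_ascPochhammer_eval (a : ℂ) (m : ℕ) :
    cPoch a m = (ascPochhammer ℂ m).eval a := by
  induction m with
  | zero => simp [cPoch]
  | succ m ih => simp [cPoch, Finset.prod_range_succ, ascPochhammer_succ_right, ← ih]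

noncomputable def oneF1Coeff (a b : ℂ) (m : ℕ) : ℂ := cPoch a m / cPoch b m / m.factorial

theorem oneF1_eq_ofScalarsSum (a b : ℂ) : oneF1 a b = ofScalarsSum (oneF1Coeff a b) := by
  funext z
  rw [ofScalars_sum_eq, oneF1]
  congr 1 with m
  rw [oneF1Coeff, smul_eq_mul]
  ring

theorem oneF1Coeff_eq_Gamma_smul (a : ℂ) (hb : ∀ k : ℕ, b ≠ -k) :
    oneF1Coeff a b = Gamma b • regularizedHGFunCoeff {a} {b} := by
  funext m
  have hΓ : Gamma b ≠ 0 := Gamma_ne_zero hb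
  have hΓm : Gamma (b + m) ≠ 0 := Gamma_ne_zero fun k => by
    have := hb (k + m); push_cast at this; contrapose! this; linear_combination this
  rw [oneF1Coeff, cPoch_eq_ascPochhammer_eval, cPoch_eq_ascPochhammer_eval,
    ← Gamma_add_nat_div_Gamma_eq b hb, Pi.smul_apply, smul_eq_mul,
    regularizedHGFunCoeff]
  simp only [Multiset.map_singleton, Multiset.prod_singleton]
  field_simp

theorem radius_ofScalars_oneF1Coeff (a : ℂ) (hb : ∀ k : ℕ, b ≠ -k) :
    (ofScalars ℂ (oneF1Coeff a b)).radius = ⊤ := by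
  rw [oneF1Coeff_eq_Gamma_smul a hb, ofScalars_smul, ← top_le_iff]
  exact (radius_regularizedHGFunSeries_eq_top (by simp)).ge.trans radius_le_smul

theorem oneF1Coeff_succ (a : ℂ) (hb : ∀ k : ℕ, b ≠ -k) (m : ℕ) :
    (m + 1) * (b + m) * oneF1Coeff a b (m + 1) = (a + m) * oneF1Coeff a b m := by
  have hbm : b + m ≠ 0 := fun h => hb m (eq_neg_of_add_eq_zero_left h)
  simp only [oneF1Coeff, cPoch, Finset.prod_range_succ, Nat.factorial_succ]
  push_cast
  field_simp

theorem kummerOp_oneF1 (a : ℂ) (hb : ∀ k : ℕ, b ≠ -k) (z : ℂ) :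
    kummerOp a b (oneF1 a b) z = 0 := by
  rw [oneF1_eq_ofScalarsSum]
  exact kummerOp_ofScalarsSum (radius_ofScalars_oneF1Coeff a hb) (oneF1Coeff_succ a hb) z

theorem differentiable_oneF1 (a : ℂ) (hb : ∀ k : ℕ, b ≠ -k) :
    Differentiable ℂ (oneF1 a b) := by
  rw [oneF1_eq_ofScalarsSum]
  exact (hasFPowerSeriesOnBall_ofScalarsSum (radius_ofScalars_oneF1Coeff a hb)).differentiable_top

end KummerFunction

section HermiteOperator

variable {𝕜 : Type*} [NontriviallyNormedField 𝕜]

noncomputable def hermiteOp (τ : 𝕜) (f : 𝕜 → 𝕜) (x : 𝕜) : 𝕜 :=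
  deriv (deriv f) x - 2 * x * deriv f x + 2 * τ * f x

theorem hasDerivAt_comp_sq {F : 𝕜 → 𝕜} {x : 𝕜} (hF : DifferentiableAt 𝕜 F (x ^ 2)) :
    HasDerivAt (fun y => F (y ^ 2)) (2 * x * deriv F (x ^ 2)) x := by
  rw [show 2 * x * deriv F (x ^ 2) = deriv F (x ^ 2) * ((2 : ℕ) * x ^ (2 - 1)) by
    push_cast; ring]
  exact hF.hasDerivAt.comp x (hasDerivAt_pow 2 x)

theorem deriv_comp_sq {F : 𝕜 → 𝕜} (hF : Differentiable 𝕜 F) :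
    deriv (fun y => F (y ^ 2)) = fun y => 2 * y * deriv F (y ^ 2) :=
  funext fun _ => (hasDerivAt_comp_sq (hF _)).deriv

theorem hermiteOp_comp_sq [CharZero 𝕜] {F : 𝕜 → 𝕜} (hF : Differentiable 𝕜 F)
    (hF' : Differentiable 𝕜 (deriv F)) (τ x : 𝕜) :
    hermiteOp τ (fun y => F (y ^ 2)) x = 4 * kummerOp (-τ / 2) (1 / 2) F (x ^ 2) := by
  have h2 := ((hasDerivAt_id' x).const_mul 2).fun_mul (hasDerivAt_comp_sq (hF' (x ^ 2)))
  rw [hermiteOp, kummerOp, deriv_comp_sq hF, h2.deriv]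
  ring

theorem hermiteOp_mul_comp_sq [CharZero 𝕜] {G : 𝕜 → 𝕜} (hG : Differentiable 𝕜 G)
    (hG' : Differentiable 𝕜 (deriv G)) (τ x : 𝕜) :
    hermiteOp τ (fun y => y * G (y ^ 2)) x =
      4 * x * kummerOp ((1 - τ) / 2) (3 / 2) G (x ^ 2) := by
  have h1 : deriv (fun y => y * G (y ^ 2)) =
      fun y => G (y ^ 2) + y * (2 * y * deriv G (y ^ 2)) :=
    funext fun y => by
      simpa using ((hasDerivAt_id' y).fun_mul (hasDerivAt_comp_sq (hG (y ^ 2)))).deriv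
  have h2 := (hasDerivAt_comp_sq (hG (x ^ 2))).fun_add ((hasDerivAt_id' x).fun_mul
    (((hasDerivAt_id' x).const_mul 2).fun_mul (hasDerivAt_comp_sq (hG' (x ^ 2)))))
  rw [hermiteOp, kummerOp, h1, h2.deriv]
  ring

theorem hermiteOp_mul_add_mul {u v : 𝕜 → 𝕜}
    (hu : Differentiable 𝕜 u) (hu' : Differentiable 𝕜 (deriv u))
    (hv : Differentiable 𝕜 v) (hv' : Differentiable 𝕜 (deriv v)) (A B τ x : 𝕜) :
    hermiteOp τ (fun y => A * u y + B * v y) x = A * hermiteOp τ u x + B * hermiteOp τ v x := by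
  have h1 : deriv (fun y => A * u y + B * v y) = fun y => A * deriv u y + B * deriv v y :=
    funext fun y =>
      (((hu y).hasDerivAt.const_mul A).fun_add ((hv y).hasDerivAt.const_mul B)).deriv
  have h2 := ((hu' x).hasDerivAt.const_mul A).fun_add ((hv' x).hasDerivAt.const_mul B)
  rw [hermiteOp, hermiteOp, hermiteOp, h1, h2.deriv]
  ring

end HermiteOperator

theorem ne_neg_natCast_of_re_pos {b : ℂ} (hb : 0 < b.re) (k : ℕ) : b ≠ -k := by
  rintro rfl
  simp only [neg_re, natCast_re] at hb
  linarith [k.cast_nonneg (α := ℝ)]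

theorem hermiteFn_ode (τ x : ℂ) :
    deriv (deriv (hermiteFn τ)) x - 2 * x * deriv (hermiteFn τ) x + 2 * τ * hermiteFn τ x = 0 := by
  have hb₁ : ∀ k : ℕ, (1 / 2 : ℂ) ≠ -k := ne_neg_natCast_of_re_pos (by norm_num)
  have hb₃ : ∀ k : ℕ, (3 / 2 : ℂ) ≠ -k := ne_neg_natCast_of_re_pos (by norm_num)
  have hF := differentiable_oneF1 (-τ / 2) hb₁
  have hG := differentiable_oneF1 ((1 - τ) / 2) hb₃
  have hu : Differentiable ℂ fun y : ℂ => oneF1 (-τ / 2) (1 / 2) (y ^ 2) :=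
    hF.comp (differentiable_pow 2)
  have hv : Differentiable ℂ fun y : ℂ => y * oneF1 ((1 - τ) / 2) (3 / 2) (y ^ 2) :=
    differentiable_id.mul (hG.comp (differentiable_pow 2))
  have hH : hermiteFn τ = fun y =>
      2 ^ τ * (Gamma (1 / 2) / Gamma ((1 - τ) / 2)) * oneF1 (-τ / 2) (1 / 2) (y ^ 2) +
      2 ^ τ * (Gamma (-(1 / 2)) / Gamma (-τ / 2)) * (y * oneF1 ((1 - τ) / 2) (3 / 2) (y ^ 2)) :=
    funext fun y => by rw [hermiteFn]; ring
  change hermiteOp τ (hermiteFn τ) x = 0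
  rw [hH, hermiteOp_mul_add_mul hu hu.deriv hv hv.deriv, hermiteOp_comp_sq hF hF.deriv,
    hermiteOp_mul_comp_sq hG hG.deriv, kummerOp_oneF1 _ hb₁, kummerOp_oneF1 _ hb₃]
  ring
end
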